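/- arXiv:1101.4204 — 2 statements merged into one kernel-verified Lean document; each statement's English description precedes it below -/
import Mathlib

section
/- Let G be a finite strongly connected directed graph that is aperiodic (i.e., the greatest common divisor of the lengths of all its cycles is 1) with N > 2 vertices. Then for every n ≥ ⌊N^(4·ln N − 1)/6⌋, there is a directed path of length exactly n between any two vertices of G. -/
/-!
Let `s` be the length of a shortest cycle `C`: its `s ≤ N` vertices are distinct and each lies on a
closed walk of length `s`. By aperiodicity the graph of `s`-step walks is strongly connected; in it
every vertex reaches `C` within `N - s` steps and every vertex is reached from any vertex of `C`
within `N - 1` steps. Padding with the loops at `C` gives walks of length exactly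
`s (2N - 1 - s) ≤ N (N - 1)` between all pairs, hence of every larger length since every vertex has
an in-neighbour; finally `6 N (N - 1) ≤ N ^ (4 ln N - 1)` for `N ≥ 3`.
-/

def HasPath {V : Type*} (E : V → V → Prop) (n : ℕ) (u v : V) : Prop :=
  ∃ f : ℕ → V, f 0 = u ∧ f n = v ∧ ∀ i < n, E (f i) (f (i + 1))

section Paths

variable {V : Type*} {E : V → V → Prop} {m n : ℕ} {u v w : V}

theorem hasPath_zero : HasPath E 0 u v ↔ u = v :=
  ⟨fun ⟨_, h0, hn, _⟩ => h0 ▸ hn, fun h => ⟨fun _ => u, rfl, h, by omega⟩⟩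

theorem hasPath_succ : HasPath E (n + 1) u v ↔ ∃ w, HasPath E n u w ∧ E w v := by
  constructor
  · rintro ⟨f, h0, hn, he⟩
    exact ⟨f n, ⟨f, h0, rfl, fun i hi => he i (by omega)⟩, hn ▸ he n n.lt_add_one⟩
  · rintro ⟨w, ⟨f, h0, hn, he⟩, hwv⟩
    refine ⟨Function.update f (n + 1) v, by simp [h0], by simp, fun i hi => ?_⟩
    rcases Nat.lt_succ_iff_lt_or_eq.mp hi with hi | rfl
    · rw [Function.update_of_ne (by omega), Function.update_of_ne (by omega)]
      exact he i hi
    · simpa [Function.update, hn] using hwv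

theorem hasPath_one : HasPath E 1 u v ↔ E u v := by
  simp [hasPath_succ, hasPath_zero]

theorem hasPath_add : HasPath E (m + n) u v ↔ ∃ w, HasPath E m u w ∧ HasPath E n w v := by
  induction n generalizing v with
  | zero => simp [hasPath_zero]
  | succ n ih =>
    simp only [← add_assoc, hasPath_succ, ih]
    grind

theorem HasPath.trans (h₁ : HasPath E m u w) (h₂ : HasPath E n w v) : HasPath E (m + n) u v :=
  hasPath_add.mpr ⟨w, h₁, h₂⟩

theorem HasPath.mul_of_loop (h : HasPath E m w w) (k : ℕ) : HasPath E (k * m) w w := by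
  induction k with
  | zero => simp [hasPath_zero]
  | succ k ih => simpa [Nat.succ_mul] using ih.trans h

theorem hasPath_hasPath {s : ℕ} : HasPath (HasPath E s) n u v ↔ HasPath E (n * s) u v := by
  induction n generalizing v with
  | zero => simp [hasPath_zero]
  | succ n ih => simp only [hasPath_succ, ih, Nat.succ_mul, hasPath_add]

theorem hasPath_segment {f : ℕ → V} (hf : ∀ i < n, E (f i) (f (i + 1))) {i j : ℕ}
    (hij : i ≤ j) (hjn : j ≤ n) : HasPath E (j - i) (f i) (f j) :=
  ⟨fun k => f (i + k), rfl, congrArg f (Nat.add_sub_cancel' hij),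
    fun k hk => hf (i + k) (by omega)⟩

theorem injOn_Iio_of_forall_not_hasPath {f : ℕ → V} (hf : ∀ i < n, E (f i) (f (i + 1)))
    (hmin : ∀ m, 0 < m → m < n → ¬ HasPath E m (f 0) (f n)) : Set.InjOn f (Set.Iio n) := by
  have excise : ∀ i j, i < j → j < n → f i ≠ f j := fun i j hij hjn heq => by
    have h := (hasPath_segment hf (Nat.zero_le i) (by omega : i ≤ n)).trans
      (heq ▸ hasPath_segment hf hjn.le le_rfl)
    exact hmin _ (by omega) (by omega) h
  intro i hi j hj heq
  by_contra hne
  rcases Nat.lt_or_gt_of_ne hne with h | h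
  · exact excise i j h hj heq
  · exact excise j i h hi heq.symm

theorem hasPath_of_le (hin : ∀ v, ∃ w, E w v) (hm : ∀ u v, HasPath E m u v) (hmn : m ≤ n) :
    ∀ u v, HasPath E n u v := by
  induction n, hmn using Nat.le_induction with
  | base => exact hm
  | succ n _ ih =>
    intro u v
    obtain ⟨w, hw⟩ := hin v
    exact hasPath_succ.mpr ⟨w, ih u w, hw⟩

theorem exists_forall_ge_hasPath_self (hsc : ∀ u v : V, ∃ n, HasPath E n u v)
    (haper : ∀ d : ℕ, (∀ n : ℕ, 0 < n → (∃ u : V, HasPath E n u u) → d ∣ n) → d = 1) (y : V) :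
    ∃ M, ∀ m ≥ M, HasPath E m y y := by
  let L : AddSubmonoid ℕ :=
    { carrier := {ℓ | HasPath E ℓ y y}
      add_mem' := fun h₁ h₂ => HasPath.trans h₁ h₂
      zero_mem' := hasPath_zero.mpr rfl }
  have hgcd : Nat.setGcd L = 1 := haper _ fun n _ ⟨z, hz⟩ => by
    obtain ⟨a, ha⟩ := hsc y z
    obtain ⟨b, hb⟩ := hsc z y
    have h₁ := Nat.setGcd_dvd_of_mem (s := L) (ha.trans hb)
    have h₂ := Nat.setGcd_dvd_of_mem (s := L) ((ha.trans hz).trans hb)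
    simpa [show a + n + b - (a + b) = n by omega] using Nat.dvd_sub h₂ h₁
  obtain ⟨M, hM⟩ := Nat.exists_mem_closure_of_ge (L : Set ℕ)
  exact ⟨M, fun m hm => (AddSubmonoid.closure_eq L).le (hM m hm (hgcd ▸ one_dvd m))⟩

theorem exists_hasPath_mul (hsc : ∀ u v : V, ∃ n, HasPath E n u v)
    (haper : ∀ d : ℕ, (∀ n : ℕ, 0 < n → (∃ u : V, HasPath E n u u) → d ∣ n) → d = 1)
    {s : ℕ} (hs : 0 < s) (x y : V) : ∃ k, HasPath E (k * s) x y := by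
  obtain ⟨a, ha⟩ := hsc x y
  obtain ⟨M, hM⟩ := exists_forall_ge_hasPath_self hsc haper y
  have hle : a + M ≤ (a + M) * s := Nat.le_mul_of_pos_right _ hs
  have h := ha.trans (hM ((a + M) * s - a) (by omega))
  exact ⟨a + M, by rwa [Nat.add_sub_cancel' (by omega)] at h⟩

variable [Fintype V]

theorem exists_hasPath_le_card_sub (W : Finset V) (h : ∃ n, ∃ w ∈ W, HasPath E n u w) :
    ∃ n ≤ Fintype.card V - W.card, ∃ w ∈ W, HasPath E n u w := by
  classical
  obtain ⟨w, hw, f, h0, hn, hf⟩ := Nat.find_spec h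
  refine ⟨Nat.find h, ?_, w, hw, f, h0, hn, hf⟩
  have hmin : ∀ m < Nat.find h, ¬ ∃ w ∈ W, HasPath E m u w := fun m => Nat.find_min h
  have hinj := injOn_Iio_of_forall_not_hasPath hf fun m _ hm hp =>
    hmin m hm ⟨f (Nat.find h), hn ▸ hw, h0 ▸ hp⟩
  have havoid : ∀ i < Nat.find h, f i ∉ W := fun i hi hfi =>
    hmin i hi ⟨f i, hfi, h0 ▸ Nat.sub_zero i ▸ hasPath_segment hf (Nat.zero_le i) hi.le⟩
  have hsub : (Finset.range (Nat.find h)).image f ⊆ Wᶜ := by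
    simpa [Finset.subset_iff] using havoid
  have hcard := Finset.card_le_card hsub
  rw [Finset.card_image_of_injOn (by simpa using hinj), Finset.card_range,
    Finset.card_compl] at hcard
  exact hcard

theorem exists_hasPath_lt_card (h : ∃ n, HasPath E n u v) :
    ∃ n < Fintype.card V, HasPath E n u v := by
  obtain ⟨n, hn, w, hw, hp⟩ := exists_hasPath_le_card_sub {v} (by simpa using h)
  have hpos : 0 < Fintype.card V := Fintype.card_pos_iff.mpr ⟨v⟩
  rw [Finset.card_singleton] at hn
  exact ⟨n, by omega, by simpa [Finset.mem_singleton.mp hw] using hp⟩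

theorem exists_card_eq_and_forall_mem_hasPath_self (h : ∃ n, 0 < n ∧ ∃ w, HasPath E n w w) :
    ∃ s > 0, ∃ W : Finset V, W.card = s ∧ ∀ w ∈ W, HasPath E s w w := by
  classical
  -- `W` is the vertex set of a shortest cycle
  obtain ⟨hs, w, f, h0, hn, hf⟩ := Nat.find_spec h
  set s := Nat.find h
  have hinj : Set.InjOn f (Set.Iio s) := injOn_Iio_of_forall_not_hasPath hf
    fun m hm hms hp => Nat.find_min h hms ⟨hm, f 0, hn.trans h0.symm ▸ hp⟩
  refine ⟨s, hs, (Finset.range s).image f, ?_, ?_⟩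
  · rw [Finset.card_image_of_injOn (by simpa using hinj), Finset.card_range]
  · simp only [Finset.mem_image, Finset.mem_range]
    rintro _ ⟨i, hi, rfl⟩
    have hloop := (hasPath_segment hf hi.le le_rfl).trans
      ((hn.trans h0.symm) ▸ hasPath_segment hf (Nat.zero_le i) hi.le)
    rwa [Nat.sub_zero, Nat.sub_add_cancel hi.le] at hloop

theorem hasPath_of_forall_mem_hasPath_self {s : ℕ} (W : Finset V) (hW : W.Nonempty)
    (hloop : ∀ w ∈ W, HasPath E s w w) (hconn : ∀ x y, ∃ k, HasPath E (k * s) x y) (x y : V) :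
    HasPath E ((2 * Fintype.card V - 1 - W.card) * s) x y := by
  simp only [← hasPath_hasPath] at hconn ⊢
  obtain ⟨w₀, hw₀⟩ := hW
  obtain ⟨k₁, hk₁, w, hw, h₁⟩ :=
    exists_hasPath_le_card_sub W ((hconn x w₀).imp fun _ h => ⟨w₀, hw₀, h⟩)
  obtain ⟨k₂, hk₂, h₂⟩ := exists_hasPath_lt_card (hconn w y)
  have hpad := (hasPath_one.mpr (hloop w hw)).mul_of_loop
    (2 * Fintype.card V - 1 - W.card - k₁ - k₂)
  have hW := Finset.card_le_univ W
  convert h₁.trans (hpad.trans h₂) using 1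
  omega

end Paths

theorem two_mul_sub_one_sub_mul_le {N s : ℕ} (hs : s ≤ N) :
    (2 * N - 1 - s) * s ≤ N * (N - 1) := by
  rcases Nat.eq_zero_or_pos s with rfl | hs0
  · simp
  · zify [show 1 ≤ N by omega, show s ≤ 2 * N - 1 by omega, show 1 ≤ 2 * N by omega]
    nlinarith [sq_nonneg ((N : ℤ) - s), sq_nonneg ((N : ℤ) - s - 1)]

section Bounds

open Real

theorem thirty_six_le_three_rpow : (36 : ℝ) ≤ 3 ^ (4 * log 3 - 1) := by
  have hlog36 : log 36 = 2 * log 2 + 2 * log 3 := by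
    rw [show (36 : ℝ) = 2 ^ 2 * 3 ^ 2 by norm_num, log_mul (by norm_num) (by norm_num),
      log_pow, log_pow]
    push_cast
    ring
  rw [rpow_def_of_pos (by norm_num), ← exp_log (by norm_num : (0 : ℝ) < 36), exp_le_exp, hlog36]
  nlinarith [log_two_lt_d9, log_three_gt_d9]

theorem six_mul_mul_pred_le_rpow {N : ℕ} (hN : 3 ≤ N) :
    6 * ((N * (N - 1) : ℕ) : ℝ) ≤ (N : ℝ) ^ (4 * log N - 1) := by
  rcases hN.eq_or_lt with rfl | hN4
  · norm_num
    linarith [thirty_six_le_three_rpow]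
  · have hN4 : (4 : ℝ) ≤ N := by exact_mod_cast hN4
    have hlog : 4 ≤ 4 * log N - 1 := by
      have : log 4 ≤ log N := log_le_log (by norm_num) hN4
      rw [show (4 : ℝ) = 2 ^ 2 by norm_num, log_pow] at this
      push_cast at this
      linarith [log_two_gt_d9]
    calc 6 * ((N * (N - 1) : ℕ) : ℝ) ≤ (N : ℝ) ^ (4 : ℝ) := by
          rw [Nat.cast_mul, Nat.cast_pred (by omega), rpow_ofNat]
          nlinarith [mul_le_mul hN4 hN4 (by norm_num) (by linarith), sq_nonneg ((N : ℝ) ^ 2)]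
      _ ≤ (N : ℝ) ^ (4 * log N - 1) := rpow_le_rpow_of_exponent_le (by linarith) hlog

end Bounds

/-- A finite strongly connected aperiodic directed graph with `N > 2` vertices has,
for every `n ≥ ⌊N^(4 ln N − 1)/6⌋`, a path of length exactly `n` between any
two vertices. -/
theorem stmt0 {V : Type*} [Fintype V] (E : V → V → Prop)
    (hN : 2 < Fintype.card V)
    (hsc : ∀ u v : V, ∃ n : ℕ, 0 < n ∧ HasPath E n u v)
    (haper : ∀ d : ℕ, (∀ n : ℕ, 0 < n → (∃ u : V, HasPath E n u u) → d ∣ n) → d = 1) :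
    ∀ n : ℕ,
      ⌊((Fintype.card V : ℝ) ^ ((4 : ℝ) * Real.log (Fintype.card V) - 1) / 6)⌋₊ ≤ n →
      ∀ u v : V, HasPath E n u v := by
  intro n hn u v
  obtain ⟨s, hs, W, rfl, hloop⟩ := exists_card_eq_and_forall_mem_hasPath_self <|
    (hsc u u).imp fun _ ⟨hpos, hp⟩ => ⟨hpos, u, hp⟩
  have hconn := exists_hasPath_mul (fun x y => (hsc x y).imp fun _ => And.right) haper hs
  have hbase := hasPath_of_forall_mem_hasPath_self W (Finset.card_pos.mp hs) hloop hconn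
  have hin : ∀ v, ∃ w, E w v := fun v => by
    obtain ⟨m, hm, hp⟩ := hsc v v
    obtain ⟨k, rfl⟩ := Nat.exists_eq_succ_of_ne_zero hm.ne'
    exact (hasPath_succ.mp hp).imp fun _ => And.right
  refine hasPath_of_le hin hbase ?_ u v
  calc (2 * Fintype.card V - 1 - W.card) * W.card
      ≤ Fintype.card V * (Fintype.card V - 1) := two_mul_sub_one_sub_mul_le W.card_le_univ
    _ ≤ _ := Nat.le_floor <| (le_div_iff₀ (by norm_num)).mpr <| by
        linarith [six_mul_mul_pred_le_rpow hN]
    _ ≤ n := hn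
end

section
/- Let P be a transition kernel on a measurable space (Γ, 𝒢) such that Γ is (m, ε, ν)-small with unique invariant probability measure π, and let A ∈ 𝒢. Then for every z ∈ Γ and n ∈ ℕ, |π(A) − P^n(z, A)| ≤ (1 − ε)^⌊n/m⌋; consequently P^n(z, A) → π(A) as n → ∞, uniformly in z. -/
/-!
Doeblin's argument. Since every `P ^ m x` dominates the common measure `ε • ν`, two copies of
the chain started at `x` and `y` can be made to agree with probability `ε` after `m` steps, so
the oscillation `sup_{x,y} (P ^ n x A - P ^ n y A)` shrinks by a factor `1 - ε` every `m` steps.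
The invariant `π` averages `x ↦ P ^ n x A` into `π A`, so `π A` lies within that oscillation
of every `P ^ n z A`.
-/

open MeasureTheory ProbabilityTheory Filter Topology

/-- The `n`-step transition kernel. -/
noncomputable def kiter {Γ : Type*} [MeasurableSpace Γ]
    (P : Kernel Γ Γ) : ℕ → Kernel Γ Γ
  | 0 => Kernel.deterministic id measurable_id
  | n + 1 => Kernel.comp P (kiter P n)

theorem kiter_eq_pow {Γ : Type*} [MeasurableSpace Γ] (P : Kernel Γ Γ) (n : ℕ) :
    kiter P n = P ^ n := by
  induction n with
  | zero => rfl
  | succ n ih => rw [kiter, ih, pow_succ']; rfl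

namespace MeasureTheory

variable {α : Type*} [MeasurableSpace α] {f : α → ℝ} {c : ℝ}

theorem integral_sub_integral_le_of_measure_univ_eq {ρ₁ ρ₂ : Measure α}
    [IsFiniteMeasure ρ₁] [IsFiniteMeasure ρ₂] (hρ : ρ₁ Set.univ = ρ₂ Set.univ)
    (hf₁ : Integrable f ρ₁) (hf₂ : Integrable f ρ₂) (hc : ∀ u v, f u - f v ≤ c) :
    ∫ u, f u ∂ρ₁ - ∫ u, f u ∂ρ₂ ≤ c * ρ₁.real Set.univ := by
  set M := ρ₁.real Set.univ
  have hM₂ : ρ₂.real Set.univ = M := by simp only [M, measureReal_def, hρ]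
  rcases (measureReal_nonneg (μ := ρ₁) (s := Set.univ)).eq_or_lt with hM | hM
  · have h₁ : ρ₁ = 0 := Measure.measure_univ_eq_zero.mp ((measureReal_eq_zero_iff).mp hM.symm)
    have h₂ : ρ₂ = 0 :=
      Measure.measure_univ_eq_zero.mp ((measureReal_eq_zero_iff).mp (hM₂.trans hM.symm))
    simp [M, h₁, h₂]
  have pointwise : ∀ v, ∫ u, f u ∂ρ₁ ≤ M * (f v + c) := fun v => by
    calc ∫ u, f u ∂ρ₁ ≤ ∫ _, f v + c ∂ρ₁ :=
          integral_mono hf₁ (integrable_const _) fun u => by linarith [hc u v]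
      _ = M * (f v + c) := by rw [integral_const, smul_eq_mul]
  have averaged : M * ∫ u, f u ∂ρ₁ ≤ M * (∫ v, f v ∂ρ₂ + c * M) :=
    calc M * ∫ u, f u ∂ρ₁ = ∫ _, ∫ u, f u ∂ρ₁ ∂ρ₂ := by rw [integral_const, hM₂, smul_eq_mul]
      _ ≤ ∫ v, M * (f v + c) ∂ρ₂ :=
          integral_mono (integrable_const _) ((hf₂.add (integrable_const c)).const_mul M) pointwise
      _ = M * (∫ v, f v ∂ρ₂ + c * M) := by
          rw [integral_const_mul, integral_add hf₂ (integrable_const c), integral_const, hM₂,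
            smul_eq_mul]
          ring
  linarith [(mul_le_mul_iff_right₀ hM).mp averaged]

/-- The common part `η` of `μ₁` and `μ₂` cancels, leaving only the residual mass `1 - η univ`. -/
theorem integral_sub_integral_le_of_common_minorant {μ₁ μ₂ η : Measure α}
    [IsProbabilityMeasure μ₁] [IsProbabilityMeasure μ₂] (h₁ : η ≤ μ₁) (h₂ : η ≤ μ₂)
    (hf₁ : Integrable f μ₁) (hf₂ : Integrable f μ₂) (hc : ∀ u v, f u - f v ≤ c) :
    ∫ u, f u ∂μ₁ - ∫ u, f u ∂μ₂ ≤ c * (1 - η.real Set.univ) := by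
  have : IsFiniteMeasure η := isFiniteMeasure_of_le μ₁ h₁
  have hrest : ∀ μ : Measure α, [IsProbabilityMeasure μ] → η ≤ μ →
      (μ - η) Set.univ = 1 - η Set.univ := fun μ _ hη => by
    rw [Measure.sub_apply MeasurableSet.univ hη, measure_univ]
  have hsplit : ∀ μ : Measure α, η ≤ μ → Integrable f μ →
      ∫ u, f u ∂μ = ∫ u, f u ∂(μ - η) + ∫ u, f u ∂η := fun μ hη hf => by
    conv_lhs => rw [← Measure.sub_add_cancel_of_le hη]
    exact integral_add_measure (hf.mono_measure Measure.sub_le) (hf.mono_measure hη)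
  have : IsFiniteMeasure (μ₁ - η) := isFiniteMeasure_of_le μ₁ Measure.sub_le
  have : IsFiniteMeasure (μ₂ - η) := isFiniteMeasure_of_le μ₂ Measure.sub_le
  have hmass : (μ₁ - η).real Set.univ = 1 - η.real Set.univ := by
    rw [measureReal_def, hrest μ₁ h₁,
      ENNReal.toReal_sub_of_le ((h₁ _).trans_eq measure_univ) ENNReal.one_ne_top,
      ENNReal.toReal_one, measureReal_def]
  have := integral_sub_integral_le_of_measure_univ_eq (by rw [hrest μ₁ h₁, hrest μ₂ h₂])
    (hf₁.mono_measure Measure.sub_le) (hf₂.mono_measure Measure.sub_le) hc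
  rw [hmass] at this
  rw [hsplit μ₁ h₁ hf₁, hsplit μ₂ h₂ hf₂]
  linarith

theorem abs_integral_sub_le_of_forall_abs_sub_le {μ : Measure α} [IsProbabilityMeasure μ]
    (hf : Integrable f μ) {x : α} (hc : ∀ y, |f y - f x| ≤ c) :
    |∫ y, f y ∂μ - f x| ≤ c := by
  have h := norm_integral_le_of_norm_le_const (μ := μ) (f := fun y => f y - f x)
    (ae_of_all _ fun y => (Real.norm_eq_abs _).trans_le (hc y))
  rwa [Real.norm_eq_abs, integral_sub hf (integrable_const _), integral_const, probReal_univ,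
    one_smul, mul_one] at h

theorem Measure.measureReal_bind_apply (μ : Measure α) {β : Type*} [MeasurableSpace β]
    (κ : Kernel α β) [IsFiniteKernel κ] {s : Set β} (hs : MeasurableSet s) :
    (μ.bind κ).real s = ∫ x, (κ x).real s ∂μ := by
  rw [measureReal_def, Measure.bind_apply hs κ.aemeasurable]
  exact (integral_toReal (κ.measurable_coe hs).aemeasurable
    (ae_of_all _ fun x => measure_lt_top _ _)).symm

end MeasureTheory

namespace ProbabilityTheory.Kernel

variable {α β : Type*} [MeasurableSpace α] [MeasurableSpace β]

instance isMarkovKernel_pow (κ : Kernel α α) [IsMarkovKernel κ] (n : ℕ) :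
    IsMarkovKernel (κ ^ n) := by
  induction n with
  | zero => rw [pow_zero]; exact inferInstanceAs (IsMarkovKernel Kernel.id)
  | succ n ih => rw [pow_succ]; exact inferInstanceAs (IsMarkovKernel ((κ ^ n) ∘ₖ κ))

theorem invariant_of_forall_eq_lintegral {κ : Kernel α α} {μ : Measure α}
    (h : ∀ s, MeasurableSet s → μ s = ∫⁻ x, κ x s ∂μ) : Invariant κ μ := by
  ext s hs
  rw [Measure.bind_apply hs κ.aemeasurable, h s hs]

theorem Invariant.pow {κ : Kernel α α} {μ : Measure α} (hκ : Invariant κ μ) (n : ℕ) :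
    Invariant (κ ^ n) μ := by
  induction n with
  | zero => exact Measure.bind_dirac
  | succ n ih => rw [pow_succ]; exact ih.comp hκ

theorem integrable_measureReal (κ : Kernel α β) [IsMarkovKernel κ] (μ : Measure α)
    [IsFiniteMeasure μ] {s : Set β} (hs : MeasurableSet s) :
    Integrable (fun x => (κ x).real s) μ :=
  Integrable.of_mem_Icc 0 1 (κ.measurable_coe hs).ennreal_toReal.aemeasurable
    (ae_of_all _ fun _ => ⟨measureReal_nonneg, measureReal_le_one⟩)

theorem measureReal_comp_sub_le_of_minorant {γ : Type*} [MeasurableSpace γ]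
    {κ : Kernel α β} [IsMarkovKernel κ] {ξ : Kernel β γ} [IsMarkovKernel ξ] {η : Measure β}
    (hη : ∀ x, η ≤ κ x) {s : Set γ} (hs : MeasurableSet s) {c : ℝ}
    (hξ : ∀ u v, (ξ u).real s - (ξ v).real s ≤ c) (x y : α) :
    ((ξ ∘ₖ κ) x).real s - ((ξ ∘ₖ κ) y).real s ≤ c * (1 - η.real Set.univ) := by
  simp only [comp_apply, Measure.measureReal_bind_apply _ ξ hs]
  exact integral_sub_integral_le_of_common_minorant (hη x) (hη y)
    (ξ.integrable_measureReal _ hs) (ξ.integrable_measureReal _ hs) hξ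

theorem measureReal_pow_sub_le_of_small {P : Kernel α α} [IsMarkovKernel P] {m : ℕ} (hm : 0 < m)
    {ε : ℝ} (hε : 0 ≤ ε) {ν : Measure α} [IsProbabilityMeasure ν]
    (hsmall : ∀ x s, MeasurableSet s → ENNReal.ofReal ε * ν s ≤ (P ^ m) x s)
    {s : Set α} (hs : MeasurableSet s) (n : ℕ) (x y : α) :
    ((P ^ n) x).real s - ((P ^ n) y).real s ≤ (1 - ε) ^ (n / m) := by
  induction n using Nat.strong_induction_on generalizing x y with
  | _ n ih =>
    rcases lt_or_ge n m with hn | hn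
    · rw [Nat.div_eq_of_lt hn, pow_zero]
      linarith [measureReal_le_one (μ := (P ^ n) x) (s := s),
        measureReal_nonneg (μ := (P ^ n) y) (s := s)]
    obtain ⟨k, rfl⟩ := Nat.exists_eq_add_of_le' hn
    have hminor : ∀ x, ENNReal.ofReal ε • ν ≤ (P ^ m) x := fun x =>
      Measure.le_iff.mpr fun t ht => hsmall x t ht
    have hmass : (ENNReal.ofReal ε • ν).real Set.univ = ε := by
      simp [measureReal_def, hε]
    have step := measureReal_comp_sub_le_of_minorant hminor hs (ih k (by omega)) x y
    rwa [hmass, ← Kernel.pow_add, mul_comm, ← pow_succ', ← Nat.add_div_right k hm] at step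

end ProbabilityTheory.Kernel

theorem tendstoUniformly_of_dist_le {ι α β : Type*} [PseudoMetricSpace β] {l : Filter ι}
    {F : ι → α → β} {f : α → β} {u : ι → ℝ} (h : ∀ x n, dist (f x) (F n x) ≤ u n)
    (hu : Tendsto u l (𝓝 0)) : TendstoUniformly F f l :=
  Metric.tendstoUniformly_iff.mpr fun _ hδ =>
    (hu.eventually_lt_const hδ).mono fun n hn x => (h x n).trans_lt hn

theorem tendsto_pow_div_atTop_nhds_zero {r : ℝ} (hr₀ : 0 ≤ r) (hr₁ : r < 1) {m : ℕ}
    (hm : 0 < m) : Tendsto (fun n : ℕ => r ^ (n / m)) atTop (𝓝 0) :=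
  (tendsto_pow_atTop_nhds_zero_of_lt_one hr₀ hr₁).comp
    (tendsto_atTop_atTop.mpr fun b => ⟨b * m, fun _ hn => (Nat.le_div_iff_mul_le hm).mpr hn⟩)

theorem stmt17_general {Γ : Type*} [MeasurableSpace Γ]
    (P : Kernel Γ Γ) [IsMarkovKernel P]
    (m : ℕ) (hm : 0 < m) (ε : ℝ) (hε : 0 < ε) (hε1 : ε ≤ 1)
    (ν : Measure Γ) [IsProbabilityMeasure ν]
    (hsmall : ∀ x : Γ, ∀ B : Set Γ, MeasurableSet B →
      ENNReal.ofReal ε * ν B ≤ kiter P m x B)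
    (π : Measure Γ) [IsProbabilityMeasure π]
    (hinv : ∀ A : Set Γ, MeasurableSet A → π A = ∫⁻ x, P x A ∂π)
    (A : Set Γ) (hA : MeasurableSet A) :
    (∀ z : Γ, ∀ n : ℕ,
      |(π A).toReal - (kiter P n z A).toReal| ≤ (1 - ε) ^ (n / m)) ∧
    TendstoUniformly (fun n : ℕ => fun z : Γ => (kiter P n z A).toReal)
      (fun _ : Γ => (π A).toReal) Filter.atTop := by
  simp only [kiter_eq_pow] at hsmall ⊢
  have hcontract := Kernel.measureReal_pow_sub_le_of_small hm hε.le hsmall hA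
  have hbound : ∀ z n, |π.real A - ((P ^ n) z).real A| ≤ (1 - ε) ^ (n / m) := fun z n => by
    have hπ := ((Kernel.invariant_of_forall_eq_lintegral hinv).pow n).def
    rw [← hπ, Measure.measureReal_bind_apply _ _ hA]
    exact abs_integral_sub_le_of_forall_abs_sub_le ((P ^ n).integrable_measureReal π hA)
      fun y => abs_sub_le_iff.mpr ⟨hcontract n y z, hcontract n z y⟩
  exact ⟨hbound, tendstoUniformly_of_dist_le hbound
    (tendsto_pow_div_atTop_nhds_zero (by linarith) (by linarith) hm)⟩

/-- Uniform ergodicity: if the whole state space is `(m, ε, ν)`-small and `π` is the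
unique invariant probability measure, then for every measurable `A`, every `z`, and
every `n`, `|π(A) − P^n(z,A)| ≤ (1−ε)^⌊n/m⌋`; consequently `P^n(z,A) → π(A)`
uniformly in `z`. -/
theorem stmt17 {Γ : Type*} [MeasurableSpace Γ]
    (P : Kernel Γ Γ) [IsMarkovKernel P]
    (m : ℕ) (hm : 0 < m) (ε : ℝ) (hε : 0 < ε) (hε1 : ε ≤ 1)
    (ν : Measure Γ) [IsProbabilityMeasure ν]
    (hsmall : ∀ x : Γ, ∀ B : Set Γ, MeasurableSet B →
      ENNReal.ofReal ε * ν B ≤ kiter P m x B)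
    (π : Measure Γ) [IsProbabilityMeasure π]
    (hinv : ∀ A : Set Γ, MeasurableSet A → π A = ∫⁻ x, P x A ∂π)
    (huniq : ∀ π' : Measure Γ, IsProbabilityMeasure π' →
      (∀ A : Set Γ, MeasurableSet A → π' A = ∫⁻ x, P x A ∂π') → π' = π)
    (A : Set Γ) (hA : MeasurableSet A) :
    (∀ z : Γ, ∀ n : ℕ,
      |(π A).toReal - (kiter P n z A).toReal| ≤ (1 - ε) ^ (n / m)) ∧
    TendstoUniformly (fun n : ℕ => fun z : Γ => (kiter P n z A).toReal)
      (fun _ : Γ => (π A).toReal) Filter.atTop :=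
  stmt17_general P m hm ε hε hε1 ν hsmall π hinv A hA
end
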